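/- arXiv:2305.18866 — 4 statements merged into one kernel-verified Lean document; each statement's English description precedes it below -/
import Mathlib

section
/- Let T be an edge-weighted tree, u, v ∈ V(T), and let p be the unique u-v-path in T. Then the leaf-status of p satisfies ℓ_T(p) = (ℓ_T(u) + ℓ_T(v) - |L(T)|·d_T(u,v))/2, where L(T) is the set of leaves of T. -/
open SimpleGraph Finset

noncomputable section

variable {V : Type*}

/-- The weight of a walk: sum of the weights of its edges. -/
def walkWeight {G : SimpleGraph V} (w : Sym2 V → ℝ) {x y : V} (p : G.Walk x y) : ℝ :=
  (p.edges.map w).sum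

/-- The unique path between two vertices of a tree. -/
noncomputable def tpath {G : SimpleGraph V} (hT : G.IsTree) (x y : V) : G.Walk x y :=
  (hT.existsUnique_path x y).choose

/-- The weighted distance between two vertices of a tree: the weight of the unique path. -/
noncomputable def tdist {G : SimpleGraph V} (hT : G.IsTree) (w : Sym2 V → ℝ) (x y : V) : ℝ :=
  walkWeight w (tpath hT x y)

/-- The distance from a vertex `x` to a path `p`: the minimum distance from `x`
to a vertex on `p`. -/
noncomputable def distToPath {G : SimpleGraph V} (hT : G.IsTree) (w : Sym2 V → ℝ)
    (x : V) {a b : V} (p : G.Walk a b) : ℝ :=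
  sInf {r | ∃ y ∈ p.support, r = tdist hT w x y}

/-- The set of leaves of a graph. -/
def leaves (G : SimpleGraph V) [Fintype V] [DecidableRel G.Adj] : Finset V :=
  Finset.univ.filter (fun v => G.degree v = 1)

/-- The leaf-status of a vertex: the sum of its distances to all leaves. -/
noncomputable def leafStatus {G : SimpleGraph V} [Fintype V] [DecidableRel G.Adj]
    (hT : G.IsTree) (w : Sym2 V → ℝ) (u : V) : ℝ :=
  ∑ x ∈ leaves G, tdist hT w u x

/-- The leaf-status of a path: the sum of the distances of all leaves to the path. -/
noncomputable def pathLeafStatus {G : SimpleGraph V} [Fintype V] [DecidableRel G.Adj]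
    (hT : G.IsTree) (w : Sym2 V → ℝ) {a b : V} (p : G.Walk a b) : ℝ :=
  ∑ x ∈ leaves G, distToPath hT w x p

/-- `Lside hT w u v` is the set `L^{uv}_u` of leaves strictly closer to `u` than to `v`. -/
noncomputable def Lside {G : SimpleGraph V} [Fintype V] [DecidableRel G.Adj]
    (hT : G.IsTree) (w : Sym2 V → ℝ) (u v : V) : Finset V :=
  (leaves G).filter (fun x => tdist hT w x u < tdist hT w x v)

/-!
For a vertex `x` and a path `p` in a tree, let `m` be the vertex where the path from `x` to
`u` first meets `p`. The path from `x` to `m` followed by the piece of `p` from `m` to any vertex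
`y` of `p` is again a path, hence it is *the* path from `x` to `y`; so
`d(x, y) = d(x, m) + d(m, y)`. With nonnegative weights this gives `d(x, p) = d(x, m)`, and
applying it to `y = u, v` gives `d(x, u) + d(x, v) - d(u, v) = 2 d(x, m)`. Summing over the
leaves proves the theorem.
-/

namespace SimpleGraph.Walk

variable {G : SimpleGraph V}

lemma IsPath.append_of_support_inter {x y z : V} {p : G.Walk x y} {q : G.Walk y z}
    (hp : p.IsPath) (hq : q.IsPath) (h : ∀ a ∈ p.support, a ∈ q.support → a = y) :
    (p.append q).IsPath := by
  rw [isPath_def, support_append]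
  refine hp.support_nodup.append hq.support_nodup.tail fun a hap haq => ?_
  have hnd := hq.support_nodup
  rw [← q.cons_tail_support] at hnd
  obtain rfl := h a hap (q.cons_tail_support ▸ List.mem_cons_of_mem _ haq)
  exact (List.nodup_cons.1 hnd).1 haq

lemma IsPath.exists_isPath_support_subset [DecidableEq V] {u v : V} {p : G.Walk u v}
    (hp : p.IsPath) {m y : V} (hm : m ∈ p.support) (hy : y ∈ p.support) :
    ∃ s : G.Walk m y, s.IsPath ∧ s.support ⊆ p.support := by
  by_cases hmy : m ∈ (p.takeUntil y hy).support
  · refine ⟨(p.takeUntil y hy).dropUntil m hmy, (hp.takeUntil hy).dropUntil hmy, ?_⟩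
    exact fun z hz => p.support_takeUntil_subset_support hy
      ((p.takeUntil y hy).support_dropUntil_subset_support hmy hz)
  · have hmd : m ∈ (p.dropUntil y hy).support := by
      rw [← p.take_spec hy, mem_support_append_iff] at hm
      exact hm.resolve_left hmy
    refine ⟨((p.dropUntil y hy).takeUntil m hmd).reverse,
      ((hp.dropUntil hy).takeUntil hmd).reverse, ?_⟩
    rw [support_reverse]
    exact fun z hz => p.support_dropUntil_subset_support hy
      ((p.dropUntil y hy).support_takeUntil_subset_support hmd (List.mem_reverse.1 hz))

lemma exists_isPath_forall_mem_support_eq_of_mem [DecidableEq V] {S : Set V} {x y : V}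
    (q : G.Walk x y) (hy : y ∈ S) :
    ∃ m ∈ S, ∃ r : G.Walk x m, r.IsPath ∧ ∀ z ∈ r.support, z ∈ S → z = m := by
  induction q with
  | nil => exact ⟨_, hy, nil, IsPath.nil, by simp_all⟩
  | @cons x' y' _ hadj q ih =>
    by_cases hx' : x' ∈ S
    · exact ⟨x', hx', nil, IsPath.nil, by simp⟩
    obtain ⟨m, hm, r, -, hr⟩ := ih hy
    refine ⟨m, hm, (cons hadj r).bypass, bypass_isPath _, fun z hz hzS => ?_⟩
    rcases List.mem_cons.1 (support_bypass_subset_support _ hz) with rfl | hz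
    · exact absurd hzS hx'
    · exact hr z hz hzS

end SimpleGraph.Walk

section Tree

variable {G : SimpleGraph V}

lemma walkWeight_append (w : Sym2 V → ℝ) {x y z : V} (p : G.Walk x y) (q : G.Walk y z) :
    walkWeight w (p.append q) = walkWeight w p + walkWeight w q := by
  simp [walkWeight, Walk.edges_append]

lemma walkWeight_reverse (w : Sym2 V → ℝ) {x y : V} (p : G.Walk x y) :
    walkWeight w p.reverse = walkWeight w p := by
  rw [walkWeight, walkWeight, Walk.edges_reverse, List.map_reverse, List.sum_reverse]

lemma walkWeight_nonneg {w : Sym2 V → ℝ} (hw : ∀ e ∈ G.edgeSet, 0 ≤ w e)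
    {x y : V} (p : G.Walk x y) : 0 ≤ walkWeight w p :=
  List.sum_nonneg fun _ hr => by
    obtain ⟨e, he, rfl⟩ := List.mem_map.1 hr
    exact hw e (p.edges_subset_edgeSet he)

lemma tpath_isPath (hT : G.IsTree) (x y : V) : (tpath hT x y).IsPath :=
  (hT.existsUnique_path x y).choose_spec.1

lemma tdist_eq_walkWeight (hT : G.IsTree) (w : Sym2 V → ℝ) {x y : V} {p : G.Walk x y}
    (hp : p.IsPath) : tdist hT w x y = walkWeight w p := by
  rw [(hT.existsUnique_path x y).choose_spec.2 p hp, tdist, tpath]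

lemma tdist_comm (hT : G.IsTree) (w : Sym2 V → ℝ) (x y : V) :
    tdist hT w x y = tdist hT w y x := by
  rw [tdist_eq_walkWeight hT w (tpath_isPath hT y x).reverse, walkWeight_reverse, tdist]

lemma tdist_nonneg (hT : G.IsTree) {w : Sym2 V → ℝ} (hw : ∀ e ∈ G.edgeSet, 0 ≤ w e)
    (x y : V) : 0 ≤ tdist hT w x y :=
  walkWeight_nonneg hw _

lemma tdist_eq_add_of_isPath_append (hT : G.IsTree) (w : Sym2 V → ℝ) {x y z : V}
    {p : G.Walk x y} {q : G.Walk y z} (hpq : (p.append q).IsPath) :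
    tdist hT w x z = tdist hT w x y + tdist hT w y z := by
  rw [tdist_eq_walkWeight hT w hpq, walkWeight_append, tdist_eq_walkWeight hT w hpq.of_append_left,
    tdist_eq_walkWeight hT w hpq.of_append_right]

lemma tdist_eq_add_of_mem_support [DecidableEq V] (hT : G.IsTree) (w : Sym2 V → ℝ) {u v m : V}
    {p : G.Walk u v} (hp : p.IsPath) (hm : m ∈ p.support) :
    tdist hT w u v = tdist hT w u m + tdist hT w m v :=
  tdist_eq_add_of_isPath_append hT w ((p.take_spec hm).symm ▸ hp)

lemma exists_mem_support_forall_tdist_eq_add [DecidableEq V] (hT : G.IsTree) (w : Sym2 V → ℝ)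
    {u v : V} {p : G.Walk u v} (hp : p.IsPath) (x : V) :
    ∃ m ∈ p.support, ∀ y ∈ p.support, tdist hT w x y = tdist hT w x m + tdist hT w m y := by
  obtain ⟨m, hm, r, hr, hr_meet⟩ :=
    (tpath hT x u).exists_isPath_forall_mem_support_eq_of_mem (S := {z | z ∈ p.support})
      p.start_mem_support
  refine ⟨m, hm, fun y hy => ?_⟩
  obtain ⟨s, hs, hs_sub⟩ := hp.exists_isPath_support_subset hm hy
  exact tdist_eq_add_of_isPath_append hT w
    (hr.append_of_support_inter hs fun a har has => hr_meet a har (hs_sub has))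

lemma distToPath_eq_tdist_add_tdist_sub_div_two (hT : G.IsTree) {w : Sym2 V → ℝ}
    (hw : ∀ e ∈ G.edgeSet, 0 ≤ w e) {u v : V} {p : G.Walk u v} (hp : p.IsPath) (x : V) :
    distToPath hT w x p = (tdist hT w x u + tdist hT w x v - tdist hT w u v) / 2 := by
  classical
  obtain ⟨m, hm, hmed⟩ := exists_mem_support_forall_tdist_eq_add hT w hp x
  have hdist : distToPath hT w x p = tdist hT w x m := by
    refine IsLeast.csInf_eq ⟨⟨m, hm, rfl⟩, ?_⟩
    rintro r ⟨y, hy, rfl⟩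
    linarith [hmed y hy, tdist_nonneg hT hw m y]
  rw [hdist]
  linarith [hmed u p.start_mem_support, hmed v p.end_mem_support,
    tdist_eq_add_of_mem_support hT w hp hm, tdist_comm hT w u m]

end Tree

/-- the leaf-status of the unique `u`-`v`-path `p` satisfies
`ℓ(p) = (ℓ(u) + ℓ(v) - |L(T)| · d(u,v)) / 2`. -/
theorem stmt1 {V : Type*} [Fintype V] {G : SimpleGraph V} [DecidableRel G.Adj]
    (hT : G.IsTree) (w : Sym2 V → ℝ) (hw : ∀ e ∈ G.edgeSet, 0 < w e)
    (u v : V) (p : G.Walk u v) (hp : p.IsPath) :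
    pathLeafStatus hT w p =
      (leafStatus hT w u + leafStatus hT w v
        - ((leaves G).card : ℝ) * tdist hT w u v) / 2 := by
  have hleaf : ∀ x ∈ leaves G, distToPath hT w x p =
      (tdist hT w u x + tdist hT w v x - tdist hT w u v) / 2 := fun x _ => by
    rw [distToPath_eq_tdist_add_tdist_sub_div_two hT (fun e he => (hw e he).le) hp x,
      tdist_comm hT w x u, tdist_comm hT w x v]
  rw [pathLeafStatus, Finset.sum_congr rfl hleaf, ← Finset.sum_div, leafStatus, leafStatus,
    Finset.sum_sub_distrib, Finset.sum_add_distrib, Finset.sum_const, nsmul_eq_mul]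
end
end

section
/- Let T be a tree with positive integer edge weights and no degree-2 vertices. Let (v_0, v_1, ..., v_k) be a path in T such that v_0 has minimum leaf-status in T. Then ℓ(v_0) ≤ ℓ(v_1) < ℓ(v_2) < ... < ℓ(v_k): the leaf-status is non-decreasing at the first step and strictly increasing thereafter along the path. -/
/-! Moving across an edge from `u` to `v` changes the leaf-status by `ω(uv) (|L_u| - |L_v|)`,
where `L_u` and `L_v` are the leaves on the two sides of the edge. Along the path, the sets of
leaves ahead of the edges `v_i v_{i+1}` decrease, and strictly at `v_1`: having degree at least
three, `v_1` has a neighbour off the path, and the leaves beyond it are ahead of `v_0 v_1` but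
not of `v_1 v_2`. Minimality of `ℓ(v_0)` puts at most half of the leaves ahead of `v_0 v_1`,
hence strictly fewer than half ahead of every later edge, and so `ℓ` increases strictly from
`v_1` on. -/

open SimpleGraph Finset

noncomputable section

variable {V : Type*}

namespace SimpleGraph.IsTree

variable {G : SimpleGraph V} (hT : G.IsTree)
include hT

lemma tpath_isPath (x y : V) : (tpath hT x y).IsPath :=
  (hT.existsUnique_path x y).choose_spec.1

lemma eq_tpath {x y : V} {p : G.Walk x y} (hp : p.IsPath) : p = tpath hT x y :=
  (hT.existsUnique_path x y).choose_spec.2 p hp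

lemma tpath_self (x : V) : tpath hT x x = .nil :=
  (hT.eq_tpath .nil).symm

lemma tdist_comm (w : Sym2 V → ℝ) (x y : V) : tdist hT w x y = tdist hT w y x := by
  rw [tdist, tdist, ← hT.eq_tpath (hT.tpath_isPath x y).reverse, walkWeight, walkWeight,
    Walk.edges_reverse, List.map_reverse, List.sum_reverse]

lemma tpath_cons {x y b : V} (h : G.Adj y x) (hy : y ∉ (tpath hT x b).support) :
    tpath hT y b = .cons h (tpath hT x b) :=
  (hT.eq_tpath ((hT.tpath_isPath x b).cons hy)).symm

lemma mem_tpath_iff_not_mem {x u v : V} (h : G.Adj u v) :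
    v ∈ (tpath hT x u).support ↔ u ∉ (tpath hT x v).support :=
  ⟨hT.isAcyclic.ne_mem_support_of_support_of_adj_of_isPath (hT.tpath_isPath x u)
      (hT.tpath_isPath x v) h,
    hT.isAcyclic.mem_support_of_ne_mem_support_of_adj_of_isPath (hT.tpath_isPath x u)
      (hT.tpath_isPath x v) h⟩

lemma tdist_eq_add_of_mem_tpath (w : Sym2 V → ℝ) {x u v : V} (h : G.Adj u v)
    (hu : u ∈ (tpath hT x v).support) :
    tdist hT w x v = tdist hT w x u + w s(u, v) := by
  rw [tdist, tdist, hT.isAcyclic.path_concat (hT.tpath_isPath x u) (hT.tpath_isPath x v) h hu]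
  simp [walkWeight, Walk.edges_concat]

lemma eq_of_adj_of_mem_tpath {x a b c : V} (hba : G.Adj b a) (hbc : G.Adj b c)
    (ha : a ∈ (tpath hT x b).support) (hc : c ∈ (tpath hT x b).support) : a = c :=
  (hT.isAcyclic.eq_penultimate_of_adj_end (hT.tpath_isPath x b) hba ha).trans
    (hT.isAcyclic.eq_penultimate_of_adj_end (hT.tpath_isPath x b) hbc hc).symm

lemma mem_tpath_of_mem_tpath {x a b c : V} (hab : G.Adj a b) (hbc : G.Adj b c) (hac : a ≠ c)
    (ha : a ∈ (tpath hT x b).support) : b ∈ (tpath hT x c).support := by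
  by_contra hb
  exact hac (hT.eq_of_adj_of_mem_tpath hab.symm hbc ha ((hT.mem_tpath_iff_not_mem hbc).2 hb))

/-- A vertex `z` farthest from `b` among those whose path to `b` passes through `u` is a leaf:
a second neighbour of `z` would prolong that path. -/
lemma exists_mem_leaves_mem_tpath [Fintype V] [DecidableRel G.Adj] {u b : V} (hub : u ≠ b) :
    ∃ x ∈ leaves G, u ∈ (tpath hT x b).support := by
  classical
  obtain ⟨z, hz, hmax⟩ := Finset.exists_max_image
    (univ.filter fun z => u ∈ (tpath hT z b).support) (fun z => (tpath hT z b).length)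
    ⟨u, by simp⟩
  simp only [mem_filter, mem_univ, true_and] at hz hmax
  have hzb : z ≠ b := by
    rintro rfl
    simp [tpath_self] at hz
    exact hub hz
  suffices G.degree z = 1 from ⟨z, by simpa [leaves], hz⟩
  have hnil : ¬(tpath hT z b).Nil := Walk.not_nil_of_ne hzb
  have hs := Walk.adj_snd hnil
  by_contra hz_deg
  have hdeg : 1 < #(G.neighborFinset z) := by
    rw [card_neighborFinset_eq_degree]
    have : 0 < G.degree z := G.degree_pos_iff_exists_adj z |>.2 ⟨_, hs⟩
    omega
  obtain ⟨z', hz', hz's⟩ := exists_mem_ne hdeg (tpath hT z b).snd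
  rw [mem_neighborFinset] at hz'
  have hz'_notMem : z' ∉ (tpath hT z b).support := fun hm =>
    hz's (hT.isAcyclic.eq_snd_of_adj_start (hT.tpath_isPath z b) hz' hm)
  have hlen := hmax z'
  rw [hT.tpath_cons hz'.symm hz'_notMem, Walk.support_cons, Walk.length_cons] at hlen
  exact absurd (hlen (List.mem_cons_of_mem _ hz)) (by omega)

end SimpleGraph.IsTree

lemma SimpleGraph.exists_adj_ne_ne_of_degree_ne_two {G : SimpleGraph V} [Fintype V]
    [DecidableRel G.Adj] [DecidableEq V] {b a c : V} (hba : G.Adj b a) (hbc : G.Adj b c)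
    (hac : a ≠ c) (hdeg : G.degree b ≠ 2) : ∃ u, G.Adj b u ∧ u ≠ a ∧ u ≠ c := by
  have hsub : {a, c} ⊆ G.neighborFinset b := by
    simp [insert_subset_iff, hba, hbc]
  have h2 : 2 ≤ G.degree b := by
    simpa [card_pair hac] using card_le_card hsub
  have hlt : #{a, c} < #(G.neighborFinset b) := by
    rw [card_pair hac, card_neighborFinset_eq_degree]
    omega
  obtain ⟨u, hu, hu'⟩ := exists_mem_notMem_of_card_lt_card hlt
  simp only [mem_insert, mem_singleton, not_or] at hu'
  exact ⟨u, (mem_neighborFinset _ _ _).1 hu, hu'⟩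

section SideLeaves

variable {G : SimpleGraph V} [Fintype V] [DecidableRel G.Adj] [DecidableEq V] (hT : G.IsTree)

/-- For an edge `u v` of positive weight this is `Lside hT w u v`, the paper's `L^{uv}_u`. -/
def sideLeaves (u v : V) : Finset V :=
  (leaves G).filter fun x => u ∈ (tpath hT x v).support

lemma mem_sideLeaves {u v x : V} :
    x ∈ sideLeaves hT u v ↔ x ∈ leaves G ∧ u ∈ (tpath hT x v).support :=
  mem_filter

lemma sideLeaves_swap {u v : V} (h : G.Adj u v) :
    sideLeaves hT v u = (leaves G).filter fun x => u ∉ (tpath hT x v).support :=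
  filter_congr fun _ _ => hT.mem_tpath_iff_not_mem h

lemma card_sideLeaves_add_card_sideLeaves {u v : V} (h : G.Adj u v) :
    #(sideLeaves hT u v) + #(sideLeaves hT v u) = #(leaves G) := by
  rw [sideLeaves_swap hT h]
  exact card_filter_add_card_filter_not _

/-- Crossing the edge `u v` moves every leaf on the `u`-side away by `w(uv)` and every other
leaf closer by `w(uv)`. -/
lemma leafStatus_sub_leafStatus (w : Sym2 V → ℝ) {u v : V} (h : G.Adj u v) :
    leafStatus hT w v - leafStatus hT w u =
      w s(u, v) * (#(sideLeaves hT u v) - #(sideLeaves hT v u)) := by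
  have hstep : ∀ x ∈ leaves G, tdist hT w v x - tdist hT w u x =
      if u ∈ (tpath hT x v).support then w s(u, v) else -w s(u, v) := by
    intro x _
    rw [hT.tdist_comm w v, hT.tdist_comm w u]
    split_ifs with hu
    · rw [hT.tdist_eq_add_of_mem_tpath w h hu]
      ring
    · rw [hT.tdist_eq_add_of_mem_tpath w h.symm ((hT.mem_tpath_iff_not_mem h).2 hu),
        Sym2.eq_swap]
      ring
  rw [leafStatus, leafStatus, ← sum_sub_distrib, sum_congr rfl hstep, sum_ite, sum_const,
    sum_const, ← sideLeaves, ← sideLeaves_swap hT h, nsmul_eq_mul, nsmul_eq_mul]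
  ring

lemma leafStatus_le_leafStatus_iff (w : Sym2 V → ℝ) {u v : V} (h : G.Adj u v)
    (hw : 0 < w s(u, v)) :
    leafStatus hT w u ≤ leafStatus hT w v ↔ #(sideLeaves hT v u) ≤ #(sideLeaves hT u v) := by
  rw [← sub_nonneg, leafStatus_sub_leafStatus hT w h, mul_nonneg_iff_of_pos_left hw, sub_nonneg,
    Nat.cast_le]

lemma leafStatus_lt_leafStatus_iff (w : Sym2 V → ℝ) {u v : V} (h : G.Adj u v)
    (hw : 0 < w s(u, v)) :
    leafStatus hT w u < leafStatus hT w v ↔ #(sideLeaves hT v u) < #(sideLeaves hT u v) := by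
  rw [← sub_pos, leafStatus_sub_leafStatus hT w h, mul_pos_iff_of_pos_left hw, sub_pos,
    Nat.cast_lt]

lemma sideLeaves_subset_sideLeaves {a b c : V} (hab : G.Adj a b) (hbc : G.Adj b c)
    (hac : a ≠ c) : sideLeaves hT a b ⊆ sideLeaves hT b c := fun x hx => by
  rw [mem_sideLeaves] at hx ⊢
  exact ⟨hx.1, hT.mem_tpath_of_mem_tpath hab hbc hac hx.2⟩

lemma disjoint_sideLeaves {a b c : V} (hba : G.Adj b a) (hbc : G.Adj b c) (hac : a ≠ c) :
    Disjoint (sideLeaves hT a b) (sideLeaves hT c b) :=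
  disjoint_left.2 fun _ ha hc =>
    hac (hT.eq_of_adj_of_mem_tpath hba hbc ((mem_sideLeaves hT).1 ha).2
      ((mem_sideLeaves hT).1 hc).2)

lemma sideLeaves_nonempty {u v : V} (huv : u ≠ v) : (sideLeaves hT u v).Nonempty := by
  obtain ⟨x, hx, hu⟩ := hT.exists_mem_leaves_mem_tpath huv
  exact ⟨x, (mem_sideLeaves hT).2 ⟨hx, hu⟩⟩

/-- At a vertex `b` of degree at least three, the leaves beyond a third neighbour `u` are on
the `b`-side of `c b` but not on the `a`-side of `a b`. -/
lemma card_sideLeaves_lt_card_sideLeaves {a b c : V} (hab : G.Adj a b) (hbc : G.Adj b c)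
    (hac : a ≠ c) (hdeg : G.degree b ≠ 2) : #(sideLeaves hT a b) < #(sideLeaves hT b c) := by
  obtain ⟨u, hbu, hua, huc⟩ := exists_adj_ne_ne_of_degree_ne_two hab.symm hbc hac hdeg
  calc #(sideLeaves hT a b)
      < #(sideLeaves hT a b) + #(sideLeaves hT u b) :=
        Nat.lt_add_of_pos_right (sideLeaves_nonempty hT hbu.ne').card_pos
    _ = #(sideLeaves hT a b ∪ sideLeaves hT u b) :=
        (card_union_of_disjoint (disjoint_sideLeaves hT hab.symm hbu hua.symm)).symm
    _ ≤ #(sideLeaves hT b c) :=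
        card_le_card (union_subset (sideLeaves_subset_sideLeaves hT hab hbc hac)
          (sideLeaves_subset_sideLeaves hT hbu.symm hbc huc))

lemma sideLeaves_succ_subset_of_le {k : ℕ} {v : ℕ → V} (hadj : ∀ i < k, G.Adj (v i) (v (i + 1)))
    (hne : ∀ i, i + 2 ≤ k → v (i + 2) ≠ v i) {i j : ℕ} (hij : i ≤ j) (hjk : j < k) :
    sideLeaves hT (v (j + 1)) (v j) ⊆ sideLeaves hT (v (i + 1)) (v i) := by
  induction j, hij using Nat.le_induction with
  | base => exact subset_rfl
  | succ j _ ih =>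
    exact (sideLeaves_subset_sideLeaves hT (hadj (j + 1) hjk).symm (hadj j (by omega)).symm
      (hne j (by omega))).trans (ih (by omega))

end SideLeaves

/-- along a path `(v_0, …, v_k)` starting at a vertex `v_0` of
minimum leaf-status, the leaf-status satisfies
`ℓ(v_0) ≤ ℓ(v_1) < ℓ(v_2) < … < ℓ(v_k)`. -/
theorem stmt6 {V : Type*} [Fintype V] {G : SimpleGraph V} [DecidableRel G.Adj]
    (hT : G.IsTree) (w : Sym2 V → ℝ)
    (hw : ∀ e ∈ G.edgeSet, ∃ n : ℕ+, w e = (n : ℝ))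
    (hdeg : ∀ x : V, G.degree x ≠ 2)
    (k : ℕ) (v : ℕ → V)
    (hinj : ∀ i j, i ≤ k → j ≤ k → v i = v j → i = j)
    (hadj : ∀ i, i < k → G.Adj (v i) (v (i + 1)))
    (hmin : ∀ y : V, leafStatus hT w (v 0) ≤ leafStatus hT w y) :
    (1 ≤ k → leafStatus hT w (v 0) ≤ leafStatus hT w (v 1)) ∧
    (∀ i, 1 ≤ i → i + 1 ≤ k →
      leafStatus hT w (v i) < leafStatus hT w (v (i + 1))) := by
  classical
  refine ⟨fun _ => hmin (v 1), fun i hi hik => ?_⟩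
  have hw_pos : ∀ j < k, 0 < w s(v j, v (j + 1)) := fun j hj => by
    obtain ⟨n, hn⟩ := hw _ (G.mem_edgeSet.2 (hadj j hj))
    exact hn ▸ Nat.cast_pos.2 n.pos
  have hne : ∀ j, j + 2 ≤ k → v (j + 2) ≠ v j := fun j hj he => by
    have := hinj _ _ hj (by omega) he
    omega
  have hA0 := (leafStatus_le_leafStatus_iff hT w (hadj 0 (by omega)) (hw_pos 0 (by omega))).1
    (hmin (v 1))
  have hA1 := card_sideLeaves_lt_card_sideLeaves hT (hadj 1 (by omega)).symm
    (hadj 0 (by omega)).symm (hne 0 (by omega)) (hdeg (v 1))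
  have hAi := card_le_card (sideLeaves_succ_subset_of_le hT hadj hne hi (by omega : i < k))
  have hsum0 := card_sideLeaves_add_card_sideLeaves hT (hadj 0 (by omega))
  rw [zero_add] at hA0 hsum0
  have hsumi := card_sideLeaves_add_card_sideLeaves hT (hadj i (by omega))
  exact (leafStatus_lt_leafStatus_iff hT w (hadj i (by omega)) (hw_pos i (by omega))).2
    (by omega)
end
end

section
/- Let T be a tree with positive edge weights, no degree-2 vertices, and at least three leaves (n = |L(T)|). Let u, v be distinct leaves minimizing q(u,v) := (n−2)·d(u,v) − Σ_{x ∈ L(T)} d(u,x) − Σ_{x ∈ L(T)} d(v,x) over all pairs of distinct leaves. Then u and v form a cherry in T. -/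
/-!
Write `(x|y)_c = (d(x,c) + d(y,c) - d(x,y)) / 2` for the Gromov product. For every point `c`,
`q(a,b) = 2 (∑_y ((a|y)_c + (b|y)_c) - (n-2) (a|b)_c - d(a,c) - d(b,c) - ∑_y d(y,c))`.

Suppose the minimizing leaves `u`, `v` are not a cherry, and let `c`, `e` be their neighbours, so
`c ≠ e`. The leaves `S ∋ u` whose path to `v` passes through `c` are split off at `c` from the
other leaves (`d(x,y) = d(x,c) + d(c,y)` for `x ∈ S`, `y ∉ S`), and likewise the leaves `T ∋ v`
whose path to `u` passes through `e`. As there are no degree-2 vertices, `|S|, |T| ≥ 2`; as `S`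
and `T` are disjoint, one of them, say `S`, has at most `n/2` elements. For `a ≠ b` in `S`
maximizing `δ = (a|b)_c` the identity gives `q(a,b) ≤ -2 ∑_y d(y,c) - 2 (n - 2|S|) δ`, while
`q(u,v) ≥ -2 ∑_y d(y,c) + 2 (v|z)_c` for a leaf `z ∈ T \ {v}`, and `(v|z)_c ≥ d(c,e) > 0`.
-/

open SimpleGraph Finset

noncomputable section

variable {V : Type*}

namespace NeighborJoining

section Metric

variable {X : Type*} [PseudoMetricSpace X]

def njQ (L : Finset X) (a b : X) : ℝ :=
  ((#L : ℝ) - 2) * dist a b - ∑ x ∈ L, dist a x - ∑ x ∈ L, dist b x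

lemma njQ_comm (L : Finset X) (a b : X) : njQ L a b = njQ L b a := by
  rw [njQ, njQ, dist_comm a b]; ring

def gromovProduct (c x y : X) : ℝ := (dist x c + dist y c - dist x y) / 2

lemma gromovProduct_nonneg (c x y : X) : 0 ≤ gromovProduct c x y := by
  have := dist_triangle_right x y c
  unfold gromovProduct; linarith

lemma gromovProduct_self (c x : X) : gromovProduct c x x = dist x c := by
  simp [gromovProduct]

lemma gromovProduct_eq_zero {c x y : X} (h : dist x y = dist x c + dist c y) :
    gromovProduct c x y = 0 := by
  rw [gromovProduct, h, dist_comm c y]; ring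

lemma njQ_eq_gromovProduct (L : Finset X) (c a b : X) :
    njQ L a b = 2 * (∑ y ∈ L, (gromovProduct c a y + gromovProduct c b y)
      - ((#L : ℝ) - 2) * gromovProduct c a b - dist a c - dist b c - ∑ y ∈ L, dist y c) := by
  simp only [njQ, gromovProduct, Finset.sum_add_distrib, ← Finset.sum_div,
    Finset.sum_sub_distrib, Finset.sum_const, nsmul_eq_mul]
  ring

lemma sum_gromovProduct_le {L S : Finset X} {c a : X} {δ : ℝ} (hSL : S ⊆ L) (ha : a ∈ S)
    (hsep : ∀ y ∈ L, y ∉ S → dist a y = dist a c + dist c y)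
    (hδ : ∀ y ∈ S, y ≠ a → gromovProduct c a y ≤ δ) :
    ∑ y ∈ L, gromovProduct c a y ≤ dist a c + (#S - 1) * δ := by
  classical
  have hout : ∀ y ∈ L, y ∉ S → gromovProduct c a y = 0 := fun y hyL hyS =>
    gromovProduct_eq_zero (hsep y hyL hyS)
  have hrest : ∑ y ∈ S.erase a, gromovProduct c a y ≤ (#S - 1) * δ := by
    calc ∑ y ∈ S.erase a, gromovProduct c a y ≤ ∑ _y ∈ S.erase a, δ :=
          sum_le_sum fun y hy => hδ y (mem_of_mem_erase hy) (ne_of_mem_erase hy)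
      _ = (#S - 1) * δ := by
          rw [sum_const, card_erase_of_mem ha, nsmul_eq_mul,
            Nat.cast_sub (card_pos.mpr ⟨a, ha⟩), Nat.cast_one]
  rw [← sum_subset hSL hout, ← add_sum_erase S _ ha, gromovProduct_self]
  linarith

structure IsSplit (L S : Finset X) (c u v : X) : Prop where
  subset : S ⊆ L
  left_mem : u ∈ S
  right_mem : v ∈ L
  right_notMem : v ∉ S
  dist_eq_add : ∀ x ∈ S, ∀ y ∈ L, y ∉ S → dist x y = dist x c + dist c y
  one_lt_card : 1 < #S

variable {L S T : Finset X} {c e u v z : X}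

namespace IsSplit

theorem exists_njQ_lt (h : IsSplit L S c u v) (hz : z ∈ L) (hzv : z ≠ v)
    (hvz : 0 < gromovProduct c v z) (hcard : 2 * #S ≤ #L) :
    ∃ a ∈ S, ∃ b ∈ S, a ≠ b ∧ njQ L a b < njQ L u v := by
  obtain ⟨a₀, ha₀, b₀, hb₀, hab₀⟩ := Finset.one_lt_card.mp h.one_lt_card
  obtain ⟨⟨a, b⟩, hab, hmax⟩ :=
    S.offDiag.exists_max_image (fun p => gromovProduct c p.1 p.2)
    ⟨(a₀, b₀), mem_offDiag.mpr ⟨ha₀, hb₀, hab₀⟩⟩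
  obtain ⟨ha, hb, hab⟩ : a ∈ S ∧ b ∈ S ∧ a ≠ b := mem_offDiag.mp hab
  refine ⟨a, ha, b, hb, hab, ?_⟩
  have hδ := gromovProduct_nonneg c a b
  have hsa := sum_gromovProduct_le (δ := gromovProduct c a b) h.subset ha (h.dist_eq_add a ha)
    fun y hy hya => hmax (a, y) (mem_offDiag.mpr ⟨ha, hy, hya.symm⟩)
  have hsb := sum_gromovProduct_le (δ := gromovProduct c a b) h.subset hb (h.dist_eq_add b hb)
    fun y hy hyb => hmax (b, y) (mem_offDiag.mpr ⟨hb, hy, hyb.symm⟩)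
  have hsu : dist u c ≤ ∑ y ∈ L, gromovProduct c u y :=
    gromovProduct_self c u ▸
      single_le_sum (fun y _ => gromovProduct_nonneg c u y) (h.subset h.left_mem)
  have hsv : dist v c + gromovProduct c v z ≤ ∑ y ∈ L, gromovProduct c v y :=
    gromovProduct_self c v ▸ add_le_sum (fun y _ => gromovProduct_nonneg c v y)
      h.right_mem hz hzv.symm
  have huv := gromovProduct_eq_zero (h.dist_eq_add u h.left_mem v h.right_mem h.right_notMem)
  have hcard' : (2 * #S : ℝ) ≤ #L := by exact_mod_cast hcard
  rw [njQ_eq_gromovProduct L c a b, njQ_eq_gromovProduct L c u v, sum_add_distrib,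
    sum_add_distrib, huv]
  linarith [mul_nonneg (sub_nonneg.mpr hcard') hδ]

end IsSplit

variable (hue : dist u e = dist u c + dist c e) (hvc : dist v c = dist v e + dist e c)
  (hce : 0 < dist c e)
include hue hvc hce

namespace IsSplit

theorem disjoint (hS : IsSplit L S c u v) (hT : IsSplit L T e v u) : Disjoint S T := by
  refine disjoint_left.mpr fun y hyS hyT => ?_
  have hyv := hS.dist_eq_add y hyS v hS.right_mem hS.right_notMem
  have hyu := hT.dist_eq_add y hyT u hT.right_mem hT.right_notMem
  linarith [dist_triangle y e v, dist_triangle y c u, dist_comm c v, dist_comm e v, dist_comm e u,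
    dist_comm c u, dist_comm e c]

theorem gromovProduct_pos (hS : IsSplit L S c u v) (hT : IsSplit L T e v u) (hz : z ∈ T) :
    0 < gromovProduct c v z := by
  have hzS : z ∉ S := disjoint_right.mp (hS.disjoint hue hvc hce hT) hz
  have huz := hS.dist_eq_add u hS.left_mem z (hT.subset hz) hzS
  have hzu := hT.dist_eq_add z hz u hT.right_mem hT.right_notMem
  rw [gromovProduct]
  linarith [dist_triangle v e z, dist_comm z c, dist_comm u z, dist_comm e u, dist_comm e z,
    dist_comm e c]

end IsSplit

theorem exists_njQ_lt_of_isSplit (hS : IsSplit L S c u v) (hT : IsSplit L T e v u) :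
    ∃ a ∈ L, ∃ b ∈ L, a ≠ b ∧ njQ L a b < njQ L u v := by
  classical
  have hcard : #S + #T ≤ #L := by
    rw [← card_union_of_disjoint (hS.disjoint hue hvc hce hT)]
    exact card_le_card (union_subset hS.subset hT.subset)
  rcases le_or_gt (2 * #S) #L with hSL | hSL
  · obtain ⟨z, hz, hzv⟩ := exists_mem_ne hT.one_lt_card v
    obtain ⟨a, ha, b, hb, hab, hlt⟩ :=
      hS.exists_njQ_lt (hT.subset hz) hzv (hS.gromovProduct_pos hue hvc hce hT hz) hSL
    exact ⟨a, hS.subset ha, b, hS.subset hb, hab, hlt⟩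
  · obtain ⟨z, hz, hzu⟩ := exists_mem_ne hS.one_lt_card u
    have hec : 0 < dist e c := dist_comm c e ▸ hce
    obtain ⟨a, ha, b, hb, hab, hlt⟩ := hT.exists_njQ_lt (hS.subset hz) hzu
      (hT.gromovProduct_pos hvc hue hec hS hz) (by omega)
    exact ⟨a, hT.subset ha, b, hT.subset hb, hab, njQ_comm L v u ▸ hlt⟩

end Metric

section Tree

variable {G : SimpleGraph V} (hT : G.IsTree) (w : Sym2 V → ℝ)

lemma tpath_isPath (x y : V) : (tpath hT x y).IsPath :=
  (hT.existsUnique_path x y).choose_spec.1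

lemma eq_tpath {x y : V} {p : G.Walk x y} (hp : p.IsPath) : p = tpath hT x y :=
  (hT.existsUnique_path x y).choose_spec.2 p hp

lemma tpath_self (x : V) : tpath hT x x = .nil :=
  (eq_tpath hT Walk.IsPath.nil).symm

lemma walkWeight_cons {x y z : V} (h : G.Adj x y) (p : G.Walk y z) :
    walkWeight w (.cons h p) = w s(x, y) + walkWeight w p := by
  simp [walkWeight]

lemma walkWeight_append {x y z : V} (p : G.Walk x y) (q : G.Walk y z) :
    walkWeight w (p.append q) = walkWeight w p + walkWeight w q := by
  simp [walkWeight]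

lemma walkWeight_reverse {x y : V} (p : G.Walk x y) : walkWeight w p.reverse = walkWeight w p := by
  simp [walkWeight, List.map_reverse]

lemma walkWeight_nonneg (hw : ∀ e ∈ G.edgeSet, 0 ≤ w e) {x y : V} (p : G.Walk x y) :
    0 ≤ walkWeight w p :=
  List.sum_nonneg <| by simpa using fun e he => hw e (p.edges_subset_edgeSet he)

lemma tdist_eq_walkWeight {x y : V} {p : G.Walk x y} (hp : p.IsPath) :
    tdist hT w x y = walkWeight w p := by
  rw [eq_tpath hT hp, tdist]

lemma tdist_self (x : V) : tdist hT w x x = 0 := by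
  simp [tdist, tpath_self, walkWeight]

lemma tdist_comm (x y : V) : tdist hT w x y = tdist hT w y x := by
  rw [tdist_eq_walkWeight hT w (tpath_isPath hT y x).reverse, walkWeight_reverse, tdist]

lemma tdist_le_walkWeight (hw : ∀ e ∈ G.edgeSet, 0 ≤ w e) {x y : V} (p : G.Walk x y) :
    tdist hT w x y ≤ walkWeight w p := by
  classical
  rw [tdist_eq_walkWeight hT w p.bypass_isPath]
  exact (p.edges_bypass_sublist_edges.map w).sum_le_sum <| by
    simpa using fun e he => hw e (p.edges_subset_edgeSet he)

lemma tdist_triangle (hw : ∀ e ∈ G.edgeSet, 0 ≤ w e) (x y z : V) :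
    tdist hT w x z ≤ tdist hT w x y + tdist hT w y z := by
  have := tdist_le_walkWeight hT w hw ((tpath hT x y).append (tpath hT y z))
  rwa [walkWeight_append] at this

lemma tdist_pos (hw : ∀ e ∈ G.edgeSet, 0 < w e) {x y : V} (hxy : x ≠ y) :
    0 < tdist hT w x y := by
  obtain ⟨z, h, p, hp⟩ := Walk.exists_eq_cons_of_ne hxy (tpath hT x y)
  rw [tdist, hp, walkWeight_cons]
  linarith [hw s(x, z) h, walkWeight_nonneg w (fun e he => (hw e he).le) p]

abbrev treePseudoMetric (hw : ∀ e ∈ G.edgeSet, 0 ≤ w e) : PseudoMetricSpace V where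
  dist := tdist hT w
  dist_self := tdist_self hT w
  dist_comm := tdist_comm hT w
  dist_triangle := tdist_triangle hT w hw

lemma tdist_add_of_mem_support {x y s : V} (hs : s ∈ (tpath hT x y).support) :
    tdist hT w x y = tdist hT w x s + tdist hT w s y := by
  classical
  have hp := tpath_isPath hT x y
  rw [tdist_eq_walkWeight hT w (hp.takeUntil hs), tdist_eq_walkWeight hT w (hp.dropUntil hs),
    ← walkWeight_append, Walk.take_spec, tdist]

lemma mem_support_of_mem_support_tpath {x y s : V} (p : G.Walk x y)
    (hs : s ∈ (tpath hT x y).support) : s ∈ p.support := by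
  classical
  rw [← eq_tpath hT p.bypass_isPath] at hs
  exact p.support_bypass_subset_support hs

lemma mem_support_tpath_of_mem_of_notMem {x y v c : V} (hx : c ∈ (tpath hT x v).support)
    (hy : c ∉ (tpath hT y v).support) : c ∈ (tpath hT x y).support := by
  have := mem_support_of_mem_support_tpath hT ((tpath hT x y).append (tpath hT y v)) hx
  exact (Walk.mem_support_append_iff _ _).mp this |>.resolve_right hy

lemma mem_support_tpath_of_forall_adj_eq {u c x : V} (hc : ∀ y, G.Adj u y → y = c)
    (hx : u ≠ x) : c ∈ (tpath hT u x).support := by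
  obtain ⟨y, h, p, hp⟩ := Walk.exists_eq_cons_of_ne hx (tpath hT u x)
  obtain rfl := hc y h
  simp [hp]

include hT in
lemma eq_or_eq_of_forall_adj_eq {u v : V} (hu : ∀ y, G.Adj u y → y = v)
    (hv : ∀ y, G.Adj v y → y = u) (t : V) : t = u ∨ t = v := by
  by_contra! ht
  obtain ⟨y, h, p, hp⟩ := Walk.exists_eq_cons_of_ne ht.1.symm (tpath hT u t)
  have hpath := tpath_isPath hT u t
  rw [hp, Walk.cons_isPath_iff] at hpath
  obtain rfl := hu y h
  exact hpath.2 (eq_tpath hT hpath.1 ▸ mem_support_tpath_of_forall_adj_eq hT hv ht.2.symm)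

lemma eq_snd_of_adj_of_mem_support {y t v : V} (h : G.Adj y t)
    (ht : t ∈ (tpath hT y v).support) : t = (tpath hT y v).snd := by
  classical
  have htake : (tpath hT y v).takeUntil t ht = .cons h .nil :=
    (eq_tpath hT ((tpath_isPath hT y v).takeUntil ht)).trans
      (eq_tpath hT (by simp [h.ne] : (Walk.cons h .nil : G.Walk y t).IsPath)).symm
  calc t = (((tpath hT y v).takeUntil t ht).append ((tpath hT y v).dropUntil t ht)).snd := by
        rw [htake]; simp
    _ = (tpath hT y v).snd := by rw [Walk.take_spec]

lemma exists_degree_eq_one_ne_mem_support_tpath [Fintype V] [DecidableRel G.Adj]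
    (hdeg : ∀ x, G.degree x ≠ 2) {u v c : V} (hcu : c ≠ u) (hcv : c ≠ v) :
    ∃ x, G.degree x = 1 ∧ x ≠ u ∧ c ∈ (tpath hT x v).support := by
  classical
  -- A vertex of this set farthest from `v` is a leaf: a neighbour other than `u` and the next
  -- vertex towards `v` would lie in the set and be farther.
  obtain ⟨y, hyB, hmax⟩ :=
    (univ.filter fun y => y ≠ u ∧ c ∈ (tpath hT y v).support).exists_max_image
    (fun y => (tpath hT y v).length) ⟨c, by simp [hcu]⟩
  simp only [mem_filter, mem_univ, true_and] at hyB hmax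
  obtain ⟨hyu, hyc⟩ := hyB
  refine ⟨y, ?_, hyu, hyc⟩
  have hyv : y ≠ v := by
    rintro rfl
    simp [tpath_self, hcv] at hyc
  have hnbr : G.neighborFinset y ⊆ {u, (tpath hT y v).snd} := by
    intro t ht
    rw [mem_neighborFinset] at ht
    by_contra! htne
    simp only [mem_insert, mem_singleton, not_or] at htne
    have hpath := (tpath_isPath hT y v).cons (h := ht.symm)
      fun hts => htne.2 (eq_snd_of_adj_of_mem_support hT ht hts)
    have := hmax t ⟨htne.1, by rw [← eq_tpath hT hpath]; simp [hyc]⟩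
    rw [← eq_tpath hT hpath, Walk.length_cons] at this
    omega
  have h1 : 0 < G.degree y :=
    (G.degree_pos_iff_exists_adj y).mpr
      ⟨_, Walk.adj_snd (Walk.not_nil_of_ne (p := tpath hT y v) hyv)⟩
  have h2 : G.degree y ≤ 2 :=
    card_neighborFinset_eq_degree G y ▸ (card_le_card hnbr).trans card_le_two
  have := hdeg y
  omega

lemma isSplit_leaves [Fintype V] [DecidableRel G.Adj] [DecidableEq V]
    (hw : ∀ e ∈ G.edgeSet, 0 ≤ w e) (hdeg : ∀ x, G.degree x ≠ 2) {u v c : V}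
    (hu : u ∈ leaves G) (hv : v ∈ leaves G)
    (hc : ∀ y, G.Adj u y → y = c) (hcu : c ≠ u) (hcv : c ≠ v) (huv : u ≠ v) :
    letI := treePseudoMetric hT w hw
    IsSplit (leaves G) {y ∈ leaves G | c ∈ (tpath hT y v).support} c u v := by
  have huS : u ∈ {y ∈ leaves G | c ∈ (tpath hT y v).support} :=
    mem_filter.mpr ⟨hu, mem_support_tpath_of_forall_adj_eq hT hc huv⟩
  obtain ⟨x, hx, hxu, hxc⟩ := exists_degree_eq_one_ne_mem_support_tpath hT hdeg hcu hcv
  let _ := treePseudoMetric hT w hw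
  exact
    { subset := filter_subset _ _
      left_mem := huS
      right_mem := hv
      right_notMem := by simp [tpath_self, hcv]
      dist_eq_add := fun x hx y hy hyS => tdist_add_of_mem_support hT w <|
        mem_support_tpath_of_mem_of_notMem hT (mem_filter.mp hx).2
          fun h => hyS (mem_filter.mpr ⟨hy, h⟩)
      one_lt_card := one_lt_card.mpr
        ⟨u, huS, x, mem_filter.mpr ⟨mem_filter.mpr ⟨mem_univ x, hx⟩, hxc⟩, hxu.symm⟩ }

end Tree

end NeighborJoining

open NeighborJoining

/-- Neighbor Joining Theorem: distinct leaves `u, v` minimizing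
`q(u,v) = (n−2)·d(u,v) − Σ_x d(u,x) − Σ_x d(v,x)` form a cherry in `T`. -/
theorem stmt10 {V : Type*} [Fintype V] {G : SimpleGraph V} [DecidableRel G.Adj]
    (hT : G.IsTree) (w : Sym2 V → ℝ) (hw : ∀ e ∈ G.edgeSet, 0 < w e)
    (hdeg : ∀ x : V, G.degree x ≠ 2) (hL : 3 ≤ (leaves G).card)
    (u v : V) (hu : u ∈ leaves G) (hv : v ∈ leaves G) (huv : u ≠ v)
    (hmin : ∀ a ∈ leaves G, ∀ b ∈ leaves G, a ≠ b →
      (((leaves G).card : ℝ) - 2) * tdist hT w u v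
          - (∑ x ∈ leaves G, tdist hT w u x)
          - (∑ x ∈ leaves G, tdist hT w v x) ≤
        (((leaves G).card : ℝ) - 2) * tdist hT w a b
          - (∑ x ∈ leaves G, tdist hT w a x)
          - (∑ x ∈ leaves G, tdist hT w b x)) :
    ∃ m : V, G.Adj u m ∧ G.Adj v m := by
  classical
  obtain ⟨c, huc, hc⟩ := degree_eq_one_iff_existsUnique_adj.mp (mem_filter.mp hu).2
  obtain ⟨e, hve, he⟩ := degree_eq_one_iff_existsUnique_adj.mp (mem_filter.mp hv).2
  by_cases hce : c = e
  · exact ⟨c, huc, hce ▸ hve⟩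
  have hnadj : ¬ G.Adj u v := fun hadj => by
    have hsub : leaves G ⊆ {u, v} := fun t _ => by
      simpa using eq_or_eq_of_forall_adj_eq hT (fun y hy => (hc y hy).trans (hc v hadj).symm)
        (fun y hy => (he y hy).trans (he u hadj.symm).symm) t
    have := (card_le_card hsub).trans card_le_two
    omega
  have hcv : c ≠ v := fun h => hnadj (h ▸ huc)
  have heu : e ≠ u := fun h => hnadj (h ▸ hve).symm
  have hw₀ : ∀ e ∈ G.edgeSet, 0 ≤ w e := fun e he => (hw e he).le
  let _ := treePseudoMetric hT w hw₀
  obtain ⟨a, ha, b, hb, hab, hlt⟩ := exists_njQ_lt_of_isSplit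
    (tdist_add_of_mem_support hT w (mem_support_tpath_of_forall_adj_eq hT hc heu.symm))
    (tdist_add_of_mem_support hT w (mem_support_tpath_of_forall_adj_eq hT he hcv.symm))
    (tdist_pos hT w hw hce)
    (isSplit_leaves hT w hw₀ hdeg hu hv hc huc.ne' hcv huv)
    (isSplit_leaves hT w hw₀ hdeg hv hu he hve.ne' heu huv.symm)
  exact absurd (hmin a ha b hb hab) (not_le.mpr hlt)
end
end

section
/- Let T be a tree with positive edge weights, no degree-2 vertices, and at least 3 leaves, and suppose distinct leaves u, v maximize z(u,v) := d(u,v) + Σ_{x∈L(T)} d(x,p_{uv}). If x is the neighbor of u in T (which is internal), then for every neighbor s of x other than u: if s is a leaf then z(u,s) = ℓ(x), and hence ℓ(x) ≤ z(u,v). -/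
open SimpleGraph Finset

noncomputable section

variable {V : Type*}

/-!
For a cherry `s₁ - c - s₂` every other leaf is nearest to the path `p_{s₁s₂}` at `c`, so
`z(s₁, s₂) = ℓ(c)`; this gives the first claim. For the second, moving from a vertex `q` to a
neighbour `m` changes `ℓ` by `w(qm) · (|L| - 2 |S|)`, where `S` is the set of leaves behind `m`.
Hence at an internal vertex `c` maximising `ℓ` every internal neighbour has at least half of the
leaves behind it, and as `c` has degree at least three this leaves room for at most one internal
neighbour: `c` is the centre of a cherry `s₁, s₂`. Since `x` is internal,
`ℓ(x) ≤ ℓ(c) = z(s₁, s₂) ≤ z(u, v)`.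
-/

namespace TreeLeafStatus

open Walk

variable {G : SimpleGraph V}

lemma walkWeight_nil (w : Sym2 V → ℝ) {x : V} : walkWeight w (nil : G.Walk x x) = 0 := by
  simp [walkWeight]

lemma walkWeight_cons (w : Sym2 V → ℝ) {x y z : V} (h : G.Adj x y) (p : G.Walk y z) :
    walkWeight w (cons h p) = w s(x, y) + walkWeight w p := by
  simp [walkWeight]

lemma walkWeight_append (w : Sym2 V → ℝ) {x y z : V} (p : G.Walk x y) (q : G.Walk y z) :
    walkWeight w (p.append q) = walkWeight w p + walkWeight w q := by
  simp [walkWeight, edges_append]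

lemma walkWeight_reverse (w : Sym2 V → ℝ) {x y : V} (p : G.Walk x y) :
    walkWeight w p.reverse = walkWeight w p := by
  simp [walkWeight, edges_reverse]

lemma walkWeight_concat (w : Sym2 V → ℝ) {x y z : V} (p : G.Walk x y) (h : G.Adj y z) :
    walkWeight w (p.concat h) = walkWeight w p + w s(y, z) := by
  simp [concat_eq_append, walkWeight_append, walkWeight_cons, walkWeight_nil]

lemma walkWeight_nonneg {w : Sym2 V → ℝ} (hw : ∀ e ∈ G.edgeSet, 0 < w e) {x y : V}
    (p : G.Walk x y) : 0 ≤ walkWeight w p := by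
  induction p with
  | nil => simp [walkWeight]
  | cons h p ih =>
    rw [walkWeight_cons]
    linarith [hw s(_, _) h]

lemma tpath_isPath (hT : G.IsTree) (x y : V) : (tpath hT x y).IsPath :=
  (hT.existsUnique_path x y).choose_spec.1

lemma eq_tpath_of_isPath (hT : G.IsTree) {x y : V} {p : G.Walk x y} (hp : p.IsPath) :
    p = tpath hT x y :=
  (hT.existsUnique_path x y).choose_spec.2 p hp

lemma tpath_self (hT : G.IsTree) (x : V) : tpath hT x x = nil :=
  (eq_tpath_of_isPath hT IsPath.nil).symm

lemma tpath_symm (hT : G.IsTree) (x y : V) : tpath hT y x = (tpath hT x y).reverse :=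
  (eq_tpath_of_isPath hT (tpath_isPath hT x y).reverse).symm

lemma mem_support_tpath_symm (hT : G.IsTree) {x y z : V} :
    z ∈ (tpath hT y x).support ↔ z ∈ (tpath hT x y).support := by
  rw [tpath_symm, support_reverse, List.mem_reverse]

lemma tpath_of_adj (hT : G.IsTree) {x y : V} (h : G.Adj x y) :
    tpath hT x y = cons h nil :=
  (eq_tpath_of_isPath hT (by simp [isPath_def, h.ne])).symm

lemma tpath_concat (hT : G.IsTree) {x y z : V} (h : G.Adj y z)
    (hz : z ∉ (tpath hT x y).support) : tpath hT x z = (tpath hT x y).concat h := by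
  have hrev : (cons h.symm (tpath hT x y).reverse).IsPath :=
    (tpath_isPath hT x y).reverse.cons (by simpa using hz)
  rw [← reverse_concat] at hrev
  rw [← reverse_reverse ((tpath hT x y).concat h)]
  exact (eq_tpath_of_isPath hT hrev.reverse).symm

lemma tdist_self (hT : G.IsTree) (w : Sym2 V → ℝ) (x : V) : tdist hT w x x = 0 := by
  rw [tdist, tpath_self, walkWeight_nil]

lemma tdist_comm (hT : G.IsTree) (w : Sym2 V → ℝ) (x y : V) :
    tdist hT w x y = tdist hT w y x := by
  rw [tdist, tdist, tpath_symm hT x y, walkWeight_reverse]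

lemma tdist_nonneg (hT : G.IsTree) {w : Sym2 V → ℝ} (hw : ∀ e ∈ G.edgeSet, 0 < w e)
    (x y : V) : 0 ≤ tdist hT w x y :=
  walkWeight_nonneg hw _

lemma tdist_pos (hT : G.IsTree) {w : Sym2 V → ℝ} (hw : ∀ e ∈ G.edgeSet, 0 < w e)
    {x y : V} (hxy : x ≠ y) : 0 < tdist hT w x y := by
  classical
  obtain ⟨z, h, p, hp⟩ := exists_eq_cons_of_ne hxy (tpath hT x y)
  rw [tdist, hp, walkWeight_cons]
  linarith [hw s(_, _) h, walkWeight_nonneg hw p]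

lemma tdist_of_adj (hT : G.IsTree) (w : Sym2 V → ℝ) {x y : V} (h : G.Adj x y) :
    tdist hT w x y = w s(x, y) := by
  rw [tdist, tpath_of_adj hT h, walkWeight_cons, walkWeight_nil, add_zero]

lemma tdist_eq_add_of_mem_support (hT : G.IsTree) (w : Sym2 V → ℝ) {x y z : V}
    (hz : z ∈ (tpath hT x y).support) :
    tdist hT w x y = tdist hT w x z + tdist hT w z y := by
  classical
  have hp := tpath_isPath hT x y
  rw [tdist, ← take_spec _ hz, walkWeight_append, eq_tpath_of_isPath hT (hp.takeUntil hz),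
    eq_tpath_of_isPath hT (hp.dropUntil hz), tdist, tdist]

lemma tdist_concat (hT : G.IsTree) (w : Sym2 V → ℝ) {x y z : V} (h : G.Adj y z)
    (hz : z ∉ (tpath hT x y).support) :
    tdist hT w x z = tdist hT w x y + w s(y, z) := by
  rw [tdist, tpath_concat hT h hz, walkWeight_concat, tdist]

lemma support_tpath_of_adj_of_mem (hT : G.IsTree) {x y z : V} (h : G.Adj z y)
    (hz : z ∈ (tpath hT x y).support) :
    (tpath hT x y).support = (tpath hT x z).support ++ [y] := by
  classical
  have hp := tpath_isPath hT x y
  rw [← take_spec _ hz, support_append, eq_tpath_of_isPath hT (hp.takeUntil hz),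
    eq_tpath_of_isPath hT (hp.dropUntil hz), tpath_of_adj hT h]
  simp

lemma eq_of_adj_of_mem_support_tpath (hT : G.IsTree) {w : Sym2 V → ℝ}
    (hw : ∀ e ∈ G.edgeSet, 0 < w e) {x y m m' : V} (h : G.Adj y m) (h' : G.Adj y m')
    (hm : m ∈ (tpath hT x y).support) (hm' : m' ∈ (tpath hT x y).support) : m = m' := by
  by_contra hne
  have hm'm : m' ∈ (tpath hT x m).support := by
    rw [support_tpath_of_adj_of_mem hT h.symm hm] at hm'
    simpa [h'.ne'] using hm'
  have hmm' : m ∈ (tpath hT x m').support := by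
    rw [support_tpath_of_adj_of_mem hT h'.symm hm'] at hm
    simpa [h.ne'] using hm
  linarith [tdist_eq_add_of_mem_support hT w hm'm, tdist_eq_add_of_mem_support hT w hmm',
    tdist_pos hT hw hne, tdist_pos hT hw (Ne.symm hne)]

lemma le_distToPath (hT : G.IsTree) (w : Sym2 V → ℝ) {x a b : V} (p : G.Walk a b) {c : ℝ}
    (h : ∀ y ∈ p.support, c ≤ tdist hT w x y) : c ≤ distToPath hT w x p :=
  le_csInf ⟨_, a, p.start_mem_support, rfl⟩ (by rintro r ⟨y, hy, rfl⟩; exact h y hy)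

lemma distToPath_le [Finite V] (hT : G.IsTree) (w : Sym2 V → ℝ) {x a b y : V}
    (p : G.Walk a b) (hy : y ∈ p.support) : distToPath hT w x p ≤ tdist hT w x y :=
  csInf_le ((Set.finite_range (tdist hT w x)).subset (by rintro r ⟨z, -, rfl⟩; exact ⟨z, rfl⟩)
    |>.bddBelow) ⟨y, hy, rfl⟩

lemma distToPath_eq [Finite V] (hT : G.IsTree) (w : Sym2 V → ℝ) {x a b y : V}
    (p : G.Walk a b) (hy : y ∈ p.support)
    (hmin : ∀ z ∈ p.support, tdist hT w x y ≤ tdist hT w x z) :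
    distToPath hT w x p = tdist hT w x y :=
  (distToPath_le hT w p hy).antisymm (le_distToPath hT w p hmin)

section Leaves

variable [Fintype V] [DecidableRel G.Adj]

lemma mem_leaves_iff {y : V} : y ∈ leaves G ↔ G.degree y = 1 := by
  simp [leaves]

lemma mem_support_tpath_of_mem_leaves (hT : G.IsTree) {u x y : V} (hu : u ∈ leaves G)
    (hx : G.Adj u x) (hy : y ≠ u) : x ∈ (tpath hT y u).support := by
  obtain ⟨r, hr, q, hq⟩ := exists_eq_cons_of_ne (Ne.symm hy) (tpath hT u y)
  have hrx : r = x := Finset.card_le_one.mp (mem_leaves_iff.mp hu).le r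
    ((G.mem_neighborFinset u r).mpr hr) x ((G.mem_neighborFinset u x).mpr hx)
  rw [mem_support_tpath_symm, hq, support_cons, ← hrx]
  exact List.mem_cons_of_mem _ q.start_mem_support

lemma tdist_eq_add_of_mem_leaves (hT : G.IsTree) (w : Sym2 V → ℝ) {u x y : V}
    (hu : u ∈ leaves G) (hx : G.Adj u x) (hy : y ≠ u) :
    tdist hT w y u = tdist hT w y x + w s(x, u) := by
  rw [tdist_eq_add_of_mem_support hT w (mem_support_tpath_of_mem_leaves hT hu hx hy),
    tdist_of_adj hT w hx.symm]

lemma notMem_leaves_of_adj (hT : G.IsTree) {w : Sym2 V → ℝ} (hw : ∀ e ∈ G.edgeSet, 0 < w e)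
    (hL : 3 ≤ (leaves G).card) {u x : V} (hu : u ∈ leaves G) (hux : G.Adj u x) :
    x ∉ leaves G := by
  classical
  intro hx
  obtain ⟨y, hy⟩ : (((leaves G).erase u).erase x).Nonempty := by
    rw [← Finset.card_pos]
    have := Finset.pred_card_le_card_erase (s := (leaves G).erase u) (a := x)
    have := Finset.pred_card_le_card_erase (s := leaves G) (a := u)
    omega
  have hyx : y ≠ x := (Finset.mem_erase.mp hy).1
  have hyu : y ≠ u := (Finset.mem_erase.mp (Finset.mem_erase.mp hy).2).1
  have h₁ := tdist_eq_add_of_mem_leaves hT w hu hux hyu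
  have h₂ := tdist_eq_add_of_mem_leaves hT w hx hux.symm hyx
  rw [Sym2.eq_swap] at h₂
  linarith [hw s(_, _) hux.symm]

lemma tdist_add_pathLeafStatus_of_cherry (hT : G.IsTree) {w : Sym2 V → ℝ}
    (hw : ∀ e ∈ G.edgeSet, 0 < w e) {c s₁ s₂ : V} (hs₁ : s₁ ∈ leaves G) (hs₂ : s₂ ∈ leaves G)
    (h₁ : G.Adj c s₁) (h₂ : G.Adj c s₂) (hne : s₁ ≠ s₂) :
    tdist hT w s₁ s₂ + pathLeafStatus hT w (tpath hT s₁ s₂) = leafStatus hT w c := by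
  classical
  have hp : tpath hT s₁ s₂ = cons h₁.symm (cons h₂ nil) :=
    (eq_tpath_of_isPath hT (by simp [isPath_def, h₁.ne', h₂.ne, hne])).symm
  have hsupp : (tpath hT s₁ s₂).support = [s₁, c, s₂] := by simp [hp]
  have hend : ∀ s ∈ [s₁, s₂], distToPath hT w s (tpath hT s₁ s₂) = 0 := by
    intro s hs
    rw [distToPath_eq hT w _ (y := s) (by simp [hsupp] at hs ⊢; tauto)
      (fun z _ => by rw [tdist_self]; exact tdist_nonneg hT hw s z), tdist_self]
  have hmid : ∀ y ∈ ((leaves G).erase s₁).erase s₂,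
      distToPath hT w y (tpath hT s₁ s₂) = tdist hT w c y := by
    intro y hy
    have hy₂ : y ≠ s₂ := (Finset.mem_erase.mp hy).1
    have hy₁ : y ≠ s₁ := (Finset.mem_erase.mp (Finset.mem_erase.mp hy).2).1
    rw [tdist_comm, distToPath_eq hT w _ (y := c) (by simp [hsupp])]
    intro z hz
    simp only [hsupp, List.mem_cons, List.not_mem_nil, or_false] at hz
    rcases hz with rfl | rfl | rfl
    · linarith [tdist_eq_add_of_mem_leaves hT w hs₁ h₁.symm hy₁, hw s(_, _) h₁]
    · exact le_rfl
    · linarith [tdist_eq_add_of_mem_leaves hT w hs₂ h₂.symm hy₂, hw s(_, _) h₂]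
  have hs₂' : s₂ ∈ (leaves G).erase s₁ := Finset.mem_erase.mpr ⟨hne.symm, hs₂⟩
  rw [pathLeafStatus, leafStatus, ← Finset.add_sum_erase _ _ hs₁, ← Finset.add_sum_erase _ _ hs₂',
    ← Finset.add_sum_erase _ _ hs₁, ← Finset.add_sum_erase _ _ hs₂', Finset.sum_congr rfl hmid,
    hend s₁ (by simp), hend s₂ (by simp), tdist, hp, walkWeight_cons, walkWeight_cons,
    walkWeight_nil, tdist_of_adj hT w h₁, tdist_of_adj hT w h₂, Sym2.eq_swap]
  ring

open Classical in
noncomputable def branchLeaves (hT : G.IsTree) (q m : V) : Finset V :=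
  (leaves G).filter (fun y => m ∈ (tpath hT y q).support)

lemma mem_branchLeaves {hT : G.IsTree} {q m y : V} :
    y ∈ branchLeaves hT q m ↔ y ∈ leaves G ∧ m ∈ (tpath hT y q).support := by
  simp [branchLeaves]

lemma branchLeaves_subset (hT : G.IsTree) (q m : V) : branchLeaves hT q m ⊆ leaves G :=
  fun _ hy => (mem_branchLeaves.mp hy).1

lemma disjoint_branchLeaves (hT : G.IsTree) {w : Sym2 V → ℝ} (hw : ∀ e ∈ G.edgeSet, 0 < w e)
    {q m m' : V} (h : G.Adj q m) (h' : G.Adj q m') (hne : m ≠ m') :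
    Disjoint (branchLeaves hT q m) (branchLeaves hT q m') :=
  Finset.disjoint_left.mpr fun _ hy hy' =>
    hne (eq_of_adj_of_mem_support_tpath hT hw h h' (mem_branchLeaves.mp hy).2
      (mem_branchLeaves.mp hy').2)

/-- A vertex farthest from `q` among those whose path to `q` passes through `m` is a leaf. -/
lemma branchLeaves_nonempty (hT : G.IsTree) {w : Sym2 V → ℝ} (hw : ∀ e ∈ G.edgeSet, 0 < w e)
    {q m : V} (h : G.Adj q m) : (branchLeaves hT q m).Nonempty := by
  classical
  obtain ⟨y, hyB, hfar⟩ := (Finset.univ.filter (fun z => m ∈ (tpath hT z q).support))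
    |>.exists_max_image (fun z => tdist hT w z q) ⟨m, by simp⟩
  simp only [Finset.mem_filter, Finset.mem_univ, true_and] at hyB hfar
  have hyq : y ≠ q := by
    rintro rfl
    simp [tpath_self, h.ne'] at hyB
  obtain ⟨r, hr, p, hp⟩ := exists_eq_cons_of_ne hyq (tpath hT y q)
  have hr_mem : r ∈ (tpath hT q y).support := by
    rw [mem_support_tpath_symm, hp, support_cons]
    exact List.mem_cons_of_mem _ p.start_mem_support
  have hnbr : ∀ r', G.Adj y r' → r' = r := by
    intro r' hr'
    by_cases hr'_mem : r' ∈ (tpath hT q y).support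
    · exact eq_of_adj_of_mem_support_tpath hT hw hr' hr hr'_mem hr_mem
    · have hext := tdist_concat hT w hr' hr'_mem
      have hpath : tpath hT r' q = cons hr'.symm (tpath hT y q) :=
        (eq_tpath_of_isPath hT ((tpath_isPath hT y q).cons
          (by rwa [mem_support_tpath_symm] at hr'_mem))).symm
      have hfar' := hfar r' (by simp [hpath, hyB])
      rw [tdist_comm hT w r', tdist_comm hT w y] at hfar'
      linarith [hw s(_, _) hr']
  refine ⟨y, mem_branchLeaves.mpr ⟨mem_leaves_iff.mpr ?_, hyB⟩⟩
  rw [← card_neighborFinset_eq_degree, Finset.card_eq_one]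
  exact ⟨r, Finset.ext fun z => by simpa using ⟨hnbr z, fun hz => hz ▸ hr⟩⟩

/-- Every leaf is `w(qm)` closer to `m` than to `q` if it lies behind `m`, and `w(qm)` farther
otherwise. -/
lemma leafStatus_of_adj (hT : G.IsTree) (w : Sym2 V → ℝ) {q m : V} (h : G.Adj q m) :
    leafStatus hT w m = leafStatus hT w q +
      w s(q, m) * ((leaves G).card - 2 * (branchLeaves hT q m).card) := by
  classical
  have hstep : ∀ y ∈ leaves G, tdist hT w m y = tdist hT w q y +
      if m ∈ (tpath hT y q).support then -w s(q, m) else w s(q, m) := by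
    intro y _
    rw [tdist_comm hT w m, tdist_comm hT w q]
    split_ifs with hy
    · rw [tdist_eq_add_of_mem_support hT w hy, tdist_comm hT w m, tdist_of_adj hT w h]
      ring
    · exact tdist_concat hT w h hy
  have hcard := Finset.card_filter_add_card_filter_not (s := leaves G)
    (fun y => m ∈ (tpath hT y q).support)
  rw [leafStatus, leafStatus, Finset.sum_congr rfl hstep, Finset.sum_add_distrib,
    Finset.sum_ite, Finset.sum_const, Finset.sum_const, nsmul_eq_mul, nsmul_eq_mul, ← hcard,
    branchLeaves]
  push_cast
  ring

lemma leafStatus_lt_of_adj (hT : G.IsTree) {w : Sym2 V → ℝ} (hw : ∀ e ∈ G.edgeSet, 0 < w e)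
    {q m : V} (h : G.Adj q m) (hlt : 2 * (branchLeaves hT q m).card < (leaves G).card) :
    leafStatus hT w q < leafStatus hT w m := by
  have hlt' : (2 * (branchLeaves hT q m).card : ℝ) < (leaves G).card := by exact_mod_cast hlt
  rw [leafStatus_of_adj hT w h]
  nlinarith [hw s(_, _) h]

section IsMax

variable (hT : G.IsTree) {w : Sym2 V → ℝ} (hw : ∀ e ∈ G.edgeSet, 0 < w e) {c : V}
  (hmax : ∀ q ∉ leaves G, leafStatus hT w q ≤ leafStatus hT w c)
include hw hmax

lemma card_le_two_mul_card_branchLeaves_of_isMax {m : V} (h : G.Adj c m) (hm : m ∉ leaves G) :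
    (leaves G).card ≤ 2 * (branchLeaves hT c m).card := by
  by_contra hlt
  exact (hmax m hm).not_gt (leafStatus_lt_of_adj hT hw h (not_le.mp hlt))

/-- Two internal neighbours of `c` would carry all the leaves between them, leaving none for a
third neighbour. -/
lemma eq_of_adj_of_notMem_leaves_of_isMax (hdeg : 3 ≤ G.degree c) {m m' : V}
    (h : G.Adj c m) (h' : G.Adj c m') (hm : m ∉ leaves G) (hm' : m' ∉ leaves G) : m = m' := by
  classical
  by_contra hne
  obtain ⟨m'', hm''⟩ : (((G.neighborFinset c).erase m).erase m').Nonempty := by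
    rw [← Finset.card_pos]
    have := Finset.pred_card_le_card_erase (s := (G.neighborFinset c).erase m) (a := m')
    have := Finset.pred_card_le_card_erase (s := G.neighborFinset c) (a := m)
    rw [card_neighborFinset_eq_degree] at this
    omega
  simp only [Finset.mem_erase, mem_neighborFinset] at hm''
  obtain ⟨hm''m', hm''m, h''⟩ := hm''
  have hdisj := disjoint_branchLeaves hT hw h h' hne
  have hdisj'' : Disjoint (branchLeaves hT c m ∪ branchLeaves hT c m') (branchLeaves hT c m'') :=
    Finset.disjoint_union_left.mpr ⟨disjoint_branchLeaves hT hw h h'' (Ne.symm hm''m),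
      disjoint_branchLeaves hT hw h' h'' (Ne.symm hm''m')⟩
  have hsub : branchLeaves hT c m ∪ branchLeaves hT c m' ∪ branchLeaves hT c m'' ⊆ leaves G :=
    Finset.union_subset (Finset.union_subset (branchLeaves_subset hT c m)
      (branchLeaves_subset hT c m')) (branchLeaves_subset hT c m'')
  have hcard := Finset.card_le_card hsub
  rw [Finset.card_union_of_disjoint hdisj'', Finset.card_union_of_disjoint hdisj] at hcard
  have := card_le_two_mul_card_branchLeaves_of_isMax hT hw hmax h hm
  have := card_le_two_mul_card_branchLeaves_of_isMax hT hw hmax h' hm'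
  have := (branchLeaves_nonempty hT hw h'').card_pos
  omega

lemma exists_cherry_of_isMax [Nontrivial V] (hdeg : ∀ x : V, G.degree x ≠ 2)
    (hc : c ∉ leaves G) :
    ∃ s₁ s₂, G.Adj c s₁ ∧ G.Adj c s₂ ∧ s₁ ≠ s₂ ∧ s₁ ∈ leaves G ∧ s₂ ∈ leaves G := by
  classical
  have hc3 : 3 ≤ G.degree c := by
    have := hT.connected.preconnected.degree_pos_of_nontrivial c
    have := hdeg c
    have := mt mem_leaves_iff.mpr hc
    omega
  have hinternal : ((G.neighborFinset c).filter (· ∉ leaves G)).card ≤ 1 :=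
    Finset.card_le_one.mpr fun m hm m' hm' => by
      simp only [Finset.mem_filter, mem_neighborFinset] at hm hm'
      exact eq_of_adj_of_notMem_leaves_of_isMax hT hw hmax hc3 hm.1 hm'.1 hm.2 hm'.2
  have hsplit := Finset.card_filter_add_card_filter_not (s := G.neighborFinset c) (· ∈ leaves G)
  rw [card_neighborFinset_eq_degree] at hsplit
  obtain ⟨s₁, hs₁, s₂, hs₂, hne⟩ :=
    Finset.one_lt_card.mp (show 1 < ((G.neighborFinset c).filter (· ∈ leaves G)).card by omega)
  simp only [Finset.mem_filter, mem_neighborFinset] at hs₁ hs₂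
  exact ⟨s₁, s₂, hs₁.1, hs₂.1, hne, hs₁.2, hs₂.2⟩

end IsMax

end Leaves

end TreeLeafStatus

open TreeLeafStatus

theorem stmt16_general {V : Type*} [Fintype V] {G : SimpleGraph V} [DecidableRel G.Adj]
    (hT : G.IsTree) (w : Sym2 V → ℝ) (hw : ∀ e ∈ G.edgeSet, 0 < w e)
    (hdeg : ∀ x : V, G.degree x ≠ 2) (hL : 3 ≤ (leaves G).card)
    (u v : V) (hu : u ∈ leaves G)
    (hmax : ∀ a ∈ leaves G, ∀ b ∈ leaves G, a ≠ b →
      tdist hT w a b + pathLeafStatus hT w (tpath hT a b) ≤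
        tdist hT w u v + pathLeafStatus hT w (tpath hT u v))
    (x : V) (hux : G.Adj u x) :
    (∀ s : V, G.Adj x s → s ≠ u → s ∈ leaves G →
      tdist hT w u s + pathLeafStatus hT w (tpath hT u s) = leafStatus hT w x) ∧
    leafStatus hT w x ≤
      tdist hT w u v + pathLeafStatus hT w (tpath hT u v) := by
  classical
  refine ⟨fun s hs hsu hsl =>
    tdist_add_pathLeafStatus_of_cherry hT hw hu hsl hux.symm hs (Ne.symm hsu), ?_⟩
  have : Nontrivial V := ⟨u, x, hux.ne⟩
  have hx : x ∉ leaves G := notMem_leaves_of_adj hT hw hL hu hux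
  obtain ⟨c, hc, hcmax⟩ := (Finset.univ.filter (· ∉ leaves G)).exists_max_image
    (leafStatus hT w) ⟨x, by simpa using hx⟩
  simp only [Finset.mem_filter, Finset.mem_univ, true_and] at hc hcmax
  obtain ⟨s₁, s₂, h₁, h₂, hne, hs₁, hs₂⟩ := exists_cherry_of_isMax hT hw hcmax hdeg hc
  calc leafStatus hT w x ≤ leafStatus hT w c := hcmax x hx
    _ = tdist hT w s₁ s₂ + pathLeafStatus hT w (tpath hT s₁ s₂) :=
      (tdist_add_pathLeafStatus_of_cherry hT hw hs₁ hs₂ h₁ h₂ hne).symm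
    _ ≤ _ := hmax s₁ hs₁ s₂ hs₂ hne

/-- if distinct leaves `u, v` maximize `z`, and `x` is the
neighbor of `u`, then every leaf neighbor `s ≠ u` of `x` satisfies
`z(u,s) = ℓ(x)`, and hence `ℓ(x) ≤ z(u,v)`. -/
theorem stmt16 {V : Type*} [Fintype V] {G : SimpleGraph V} [DecidableRel G.Adj]
    (hT : G.IsTree) (w : Sym2 V → ℝ) (hw : ∀ e ∈ G.edgeSet, 0 < w e)
    (hdeg : ∀ x : V, G.degree x ≠ 2) (hL : 3 ≤ (leaves G).card)
    (u v : V) (hu : u ∈ leaves G) (hv : v ∈ leaves G) (huv : u ≠ v)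
    (hmax : ∀ a ∈ leaves G, ∀ b ∈ leaves G, a ≠ b →
      tdist hT w a b + pathLeafStatus hT w (tpath hT a b) ≤
        tdist hT w u v + pathLeafStatus hT w (tpath hT u v))
    (x : V) (hux : G.Adj u x) :
    (∀ s : V, G.Adj x s → s ≠ u → s ∈ leaves G →
      tdist hT w u s + pathLeafStatus hT w (tpath hT u s) = leafStatus hT w x) ∧
    leafStatus hT w x ≤
      tdist hT w u v + pathLeafStatus hT w (tpath hT u v) :=
  stmt16_general hT w hw hdeg hL u v hu hmax x hux
end
end
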